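/- ∫₀¹ (J₁(2t)/(t√(1−t²))) dt = (π/2)(J₀(1)² + J₁(1)²); more generally, for C > 0, (12C/π²) ∫₀¹ J₁(2t/C)/(t√(1−t²)) dt = (6/π)(J₀(1/C)² + J₁(1/C)²). -/

import Mathlib

open Real

/-- The Bessel function of the first kind of order 0, via its power series. -/
noncomputable def besselJ0 (x : ℝ) : ℝ :=
  ∑' m : ℕ, ((-1 : ℝ) ^ m / (Nat.factorial m * Nat.factorial m)) * (x / 2) ^ (2 * m)

/-- The Bessel function of the first kind of order 1, via its power series. -/
noncomputable def besselJ1 (x : ℝ) : ℝ :=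
  ∑' m : ℕ, ((-1 : ℝ) ^ m / (Nat.factorial m * Nat.factorial (m + 1))) * (x / 2) ^ (2 * m + 1)

open MeasureTheory Finset
open scoped Nat

/-!
Substituting `t = sin θ` turns the integrand into the power series
`J₁(2a sin θ) / sin θ = ∑ₘ (-1)ᵐ a^(2m+1) sin^(2m) θ / (m! (m+1)!)`,
which is integrated termwise by Wallis' formula
`∫₀^{π/2} sin^(2m) θ dθ = (π/2) (2m)! / (4ᵐ m!²)`.
On the other side, Cauchy products and Vandermonde's identity give
`J₀(a)² + J₁(a)² = ∑ₙ (-1)ⁿ (2n)! (a/2)^(2n) / (n!³ (n+1)!)`,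
and the two series agree termwise:
`∫₀¹ J₁(2at) / (t √(1 - t²)) dt = (π a / 2) (J₀(a)² + J₁(a)²)` for every real `a`.
-/

noncomputable def besselTerm (k m : ℕ) (x : ℝ) : ℝ :=
  (-1) ^ m / (m ! * (m + k)!) * (x / 2) ^ (2 * m + k)

theorem besselJ0_eq_tsum (x : ℝ) : besselJ0 x = ∑' m, besselTerm 0 m x := rfl

theorem besselJ1_eq_tsum (x : ℝ) : besselJ1 x = ∑' m, besselTerm 1 m x := rfl

theorem norm_besselTerm_le (k : ℕ) (x : ℝ) (m : ℕ) :
    ‖besselTerm k m x‖ ≤ |x / 2| ^ k * (((x / 2) ^ 2) ^ m / m !) := by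
  have hfac : (m ! : ℝ) ≤ m ! * (m + k)! :=
    le_mul_of_one_le_right (by positivity) (mod_cast (m + k).factorial_pos)
  have hsq : |x / 2| ^ (2 * m) = ((x / 2) ^ 2) ^ m := by rw [pow_mul, sq_abs]
  rw [besselTerm, norm_mul, norm_div, norm_pow, norm_neg, norm_one, one_pow, norm_pow,
    Real.norm_eq_abs, Real.norm_eq_abs, pow_add, hsq, abs_of_pos (by positivity)]
  calc 1 / (m ! * (m + k)! : ℝ) * (((x / 2) ^ 2) ^ m * |x / 2| ^ k)
      = |x / 2| ^ k * (((x / 2) ^ 2) ^ m / (m ! * (m + k)!)) := by ring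
    _ ≤ |x / 2| ^ k * (((x / 2) ^ 2) ^ m / m !) := by gcongr

theorem summable_norm_besselTerm (k : ℕ) (x : ℝ) : Summable fun m ↦ ‖besselTerm k m x‖ :=
  .of_nonneg_of_le (fun _ ↦ norm_nonneg _) (norm_besselTerm_le k x)
    ((Real.summable_pow_div_factorial _).mul_left _)

theorem sum_antidiagonal_inv_factorial_mul (k n : ℕ) :
    ∑ p ∈ antidiagonal n, (1 : ℝ) / (p.1 ! * (p.1 + k)! * (p.2 ! * (p.2 + k)!)) =
      (2 * n + 2 * k)! / (n ! * (n + 2 * k)! * ((n + k)! ^ 2)) := by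
  have hvand : ((n + k + (n + k)).choose n : ℝ) =
      ∑ p ∈ antidiagonal n, ((n + k).choose p.1 : ℝ) * (n + k).choose p.2 := by
    exact_mod_cast Nat.add_choose_eq (n + k) (n + k) n
  rw [Nat.cast_choose ℝ (by omega), show n + k + (n + k) - n = n + 2 * k by omega,
    show n + k + (n + k) = 2 * n + 2 * k by omega] at hvand
  -- for `i + j = n`, `(n + k)!² / (i! (i + k)! j! (j + k)!) = C(n + k, i) C(n + k, j)`
  rw [← div_div, hvand, sum_div]
  refine sum_congr rfl fun ⟨i, j⟩ hij ↦ ?_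
  obtain rfl : i + j = n := mem_antidiagonal.mp hij
  rw [Nat.cast_choose ℝ (by omega), Nat.cast_choose ℝ (by omega),
    show i + j + k - i = j + k by omega, show i + j + k - j = i + k by omega]
  field_simp

theorem sum_antidiagonal_besselTerm_mul (k n : ℕ) (x : ℝ) :
    ∑ p ∈ antidiagonal n, besselTerm k p.1 x * besselTerm k p.2 x =
      (-1) ^ n * (2 * n + 2 * k)! / (n ! * (n + 2 * k)! * (n + k)! ^ 2) *
        (x / 2) ^ (2 * n + 2 * k) := by
  have hterm : ∀ p ∈ antidiagonal n, besselTerm k p.1 x * besselTerm k p.2 x =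
      (-1) ^ n * (x / 2) ^ (2 * n + 2 * k) * (1 / (p.1 ! * (p.1 + k)! * (p.2 ! * (p.2 + k)!))) := by
    rintro ⟨i, j⟩ hij
    obtain rfl : i + j = n := mem_antidiagonal.mp hij
    rw [besselTerm, besselTerm, show 2 * (i + j) + 2 * k = (2 * i + k) + (2 * j + k) by ring,
      pow_add, pow_add]
    field_simp
    ring
  rw [sum_congr rfl hterm, ← mul_sum, sum_antidiagonal_inv_factorial_mul]
  ring

theorem hasSum_sq_tsum_besselTerm (k : ℕ) (x : ℝ) :
    HasSum (fun n ↦ (-1) ^ n * (2 * n + 2 * k)! / (n ! * (n + 2 * k)! * (n + k)! ^ 2) *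
        (x / 2) ^ (2 * n + 2 * k)) ((∑' m, besselTerm k m x) ^ 2) := by
  have hs := summable_norm_besselTerm k x
  rw [sq (∑' m, _), tsum_mul_tsum_eq_tsum_sum_antidiagonal_of_summable_norm hs hs]
  simpa only [sum_antidiagonal_besselTerm_mul] using
    (summable_norm_sum_mul_antidiagonal_of_summable_norm hs hs).of_norm.hasSum

theorem hasSum_besselJ0_sq_add_besselJ1_sq (x : ℝ) :
    HasSum (fun n ↦ (-1) ^ n * (2 * n)! / (n ! ^ 3 * (n + 1)!) * (x / 2) ^ (2 * n))
      (besselJ0 x ^ 2 + besselJ1 x ^ 2) := by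
  have h0 := hasSum_sq_tsum_besselTerm 0 x
  have h1 := hasSum_sq_tsum_besselTerm 1 x
  rw [← besselJ0_eq_tsum] at h0
  rw [← besselJ1_eq_tsum] at h1
  -- the series of `J₁²` starts at `(x/2)²`, so it is added to the tail of that of `J₀²`
  rw [← hasSum_nat_add_iff' 1]
  convert ((hasSum_nat_add_iff' 1).mpr h0).add h1 using 1
  · funext n
    simp only [mul_zero, add_zero, show 2 * (n + 1) = 2 * n + 2 by ring,
      show n + 2 * 1 = n + 1 + 1 by ring, Nat.factorial_succ, Nat.cast_mul, Nat.cast_succ]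
    field_simp
    ring
  · simp only [mul_zero, add_zero, sum_range_one]
    ring

theorem integral_sin_pow_even_pi_div_two (n : ℕ) :
    ∫ θ in (0 : ℝ)..π / 2, sin θ ^ (2 * n) = π / 2 * (2 * n)! / (4 ^ n * n ! ^ 2) := by
  induction n with
  | zero => simp
  | succ n ih =>
    rw [Nat.mul_succ, integral_sin_pow, ih, sin_zero, cos_pi_div_two,
      show 2 * n + 2 = 2 * n + 1 + 1 by ring]
    simp only [Nat.factorial_succ, Nat.cast_mul, Nat.cast_succ]
    field_simp
    ring

theorem setIntegral_Ioo_zero_one_eq_integral_sin (g : ℝ → ℝ) :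
    ∫ t in Set.Ioo 0 1, g t = ∫ θ in Set.Ioo 0 (π / 2), cos θ * g (sin θ) := by
  have hsub : Set.Icc 0 (π / 2) ⊆ Set.Icc (-(π / 2)) (π / 2) :=
    Set.Icc_subset_Icc_left (by linarith [pi_pos])
  have himage : sin '' Set.Ioo 0 (π / 2) = Set.Ioo 0 1 := by
    simpa using continuous_sin.continuousOn.image_Ioo_of_strictMonoOn (by positivity)
      (strictMonoOn_sin.mono hsub)
  rw [← himage, integral_image_eq_integral_abs_deriv_smul measurableSet_Ioo
    (fun θ _ ↦ (hasDerivAt_sin θ).hasDerivWithinAt)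
    (injOn_sin.mono (Set.Ioo_subset_Icc_self.trans hsub))]
  refine setIntegral_congr_fun measurableSet_Ioo fun θ hθ ↦ ?_
  rw [abs_of_pos (cos_pos_of_mem_Ioo ⟨by linarith [hθ.1, pi_pos], hθ.2⟩), smul_eq_mul]

theorem hasSum_integral_tsum_mul_pow {c : ℕ → ℝ} (hc : Summable fun m ↦ ‖c m‖) {f : ℝ → ℝ}
    (hf : Continuous f) (hf_le : ∀ x, ‖f x‖ ≤ 1) (a b : ℝ) :
    HasSum (fun m ↦ c m * ∫ x in a..b, f x ^ m) (∫ x in a..b, ∑' m, c m * f x ^ m) := by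
  have hbound (m : ℕ) (x : ℝ) : ‖c m * f x ^ m‖ ≤ ‖c m‖ := by
    rw [norm_mul, norm_pow]
    exact mul_le_of_le_one_right (norm_nonneg _) (pow_le_one₀ (norm_nonneg _) (hf_le x))
  simp_rw [← intervalIntegral.integral_const_mul]
  exact intervalIntegral.hasSum_integral_of_dominated_convergence (fun m _ ↦ ‖c m‖)
    (fun m ↦ (by fun_prop : Continuous fun x ↦ c m * f x ^ m).aestronglyMeasurable)
    (fun m ↦ ae_of_all _ fun x _ ↦ hbound m x) (ae_of_all _ fun _ _ ↦ hc)
    intervalIntegrable_const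
    (ae_of_all _ fun x _ ↦ (Summable.of_norm_bounded hc (hbound · x)).hasSum)

theorem besselJ1_mul_div (x : ℝ) {s : ℝ} (hs : s ≠ 0) :
    besselJ1 (x * s) / s = ∑' m, besselTerm 1 m x * (s ^ 2) ^ m := by
  rw [besselJ1_eq_tsum, ← tsum_div_const]
  refine tsum_congr fun m ↦ ?_
  rw [besselTerm, besselTerm, ← pow_mul, show x * s / 2 = x / 2 * s by ring, mul_pow, pow_succ s]
  field_simp

theorem integral_besselJ1_two_mul_div (a : ℝ) :
    ∫ t in (0 : ℝ)..1, besselJ1 (2 * a * t) / (t * √(1 - t ^ 2)) =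
      π * a / 2 * (besselJ0 a ^ 2 + besselJ1 a ^ 2) := by
  have hsubst : ∫ t in (0 : ℝ)..1, besselJ1 (2 * a * t) / (t * √(1 - t ^ 2)) =
      ∫ θ in (0 : ℝ)..π / 2, ∑' m, besselTerm 1 m (2 * a) * (sin θ ^ 2) ^ m := by
    rw [intervalIntegral.integral_of_le zero_le_one,
      intervalIntegral.integral_of_le (by positivity), integral_Ioc_eq_integral_Ioo,
      integral_Ioc_eq_integral_Ioo, setIntegral_Ioo_zero_one_eq_integral_sin]
    refine setIntegral_congr_fun measurableSet_Ioo fun θ hθ ↦ ?_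
    have hcos : 0 < cos θ := cos_pos_of_mem_Ioo ⟨by linarith [hθ.1, pi_pos], hθ.2⟩
    have hsin : 0 < sin θ := sin_pos_of_pos_of_lt_pi hθ.1 (by linarith [hθ.2, pi_pos])
    rw [← cos_sq', sqrt_sq hcos.le, ← besselJ1_mul_div _ hsin.ne']
    field_simp
  have hseries := hasSum_integral_tsum_mul_pow (summable_norm_besselTerm 1 (2 * a))
    (f := fun θ ↦ sin θ ^ 2) (by fun_prop) (fun θ ↦ by simpa using sin_sq_le_one θ) 0 (π / 2)
  rw [hsubst]
  refine hseries.unique ?_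
  refine ((hasSum_besselJ0_sq_add_besselJ1_sq a).mul_left (π * a / 2)).congr_fun fun m ↦ ?_
  rw [← intervalIntegral.integral_congr (fun θ _ ↦ pow_mul (sin θ) 2 m),
    integral_sin_pow_even_pi_div_two, besselTerm, show 2 * a / 2 = a by ring,
    div_pow a 2 (2 * m), show (2 : ℝ) ^ (2 * m) = 4 ^ m by rw [pow_mul]; norm_num]
  field_simp
  ring

/-- `∫₀¹ J₁(2t)/(t√(1−t²)) dt = (π/2)(J₀(1)² + J₁(1)²)`, and more generally for `C > 0`,
`(12C/π²) ∫₀¹ J₁(2t/C)/(t√(1−t²)) dt = (6/π)(J₀(1/C)² + J₁(1/C)²)`. -/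
theorem integral_besselJ1_eq :
    (∫ t in (0 : ℝ)..1, besselJ1 (2 * t) / (t * Real.sqrt (1 - t ^ 2))) =
      (Real.pi / 2) * (besselJ0 1 ^ 2 + besselJ1 1 ^ 2) ∧
    ∀ C : ℝ, 0 < C →
      (12 * C / Real.pi ^ 2) *
          ∫ t in (0 : ℝ)..1, besselJ1 (2 * t / C) / (t * Real.sqrt (1 - t ^ 2)) =
        (6 / Real.pi) * (besselJ0 (1 / C) ^ 2 + besselJ1 (1 / C) ^ 2) := by
  refine ⟨by simpa using integral_besselJ1_two_mul_div 1, fun C hC ↦ ?_⟩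
  have h := integral_besselJ1_two_mul_div (1 / C)
  simp_rw [show ∀ t, 2 * (1 / C) * t = 2 * t / C from fun t ↦ by ring] at h
  rw [h]
  field_simp
  ring
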